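/- Let −1/2 < α < 1/2 and let θ > 0 satisfy 1/(1+θ) < α + 1/2. There is a constant C = C(α,θ) such that for every measurable f ≥ 0 on (0,∞) and every x > 0: Ψ^{α,0}_{*,E} f(x) ≤ C ( [D(f^{1+θ})(x)]^{1/(1+θ)} + [R(f^{1+θ})(x)]^{1/(1+θ)} ). -/

import Mathlib

open MeasureTheory Set Filter
open scoped ENNReal NNReal

noncomputable def PsiE (a b t x z : ℝ) : ℝ :=
  if |x - z| < t ∧ t < x + z then
    (x * z) ^ (-(2*a) - b) * t ^ (-(2*a) - 2*b) *
      ((t ^ 2 - (x - z) ^ 2) * ((x + z) ^ 2 - t ^ 2)) ^ (a + b - 1/2)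
  else 0

noncomputable def PsiStarE (a b : ℝ) (f : ℝ → ℝ) (x : ℝ) : ℝ≥0∞ :=
  ⨆ t ∈ Set.Ioi (0 : ℝ),
    ∫⁻ z in Set.Ioi (0 : ℝ), ENNReal.ofReal (PsiE a b t x z * f z * z ^ (2 * a + 1))

noncomputable def Dop (f : ℝ → ℝ) (x : ℝ) : ℝ≥0∞ :=
  ⨆ (A : ℝ) (B : ℝ) (_ : 0 ≤ A) (_ : A < x) (_ : x < B),
    (ENNReal.ofReal (B ^ 2 - A ^ 2))⁻¹ * ∫⁻ z in Set.Ioo A B, ENNReal.ofReal (z * |f z|)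

noncomputable def Rop (f : ℝ → ℝ) (x : ℝ) : ℝ≥0∞ :=
  ⨆ t ∈ Set.Ioi (2 * x),
    (ENNReal.ofReal (2 * x))⁻¹ * ∫⁻ z in Set.Icc (t - x) (t + x), ENNReal.ofReal |f z|

/-! For fixed `t`, `Ψ_t^{α,0}(x, z) z^{2α+1}` vanishes unless `c < z < d`, where `c = |x - t|` and
`d = x + t`, and there it equals `z (xt)^{-2α} ((z + c)(d + z))^{α-1/2} ((z - c)(d - z))^{α-1/2}`.
Apply Hölder with `p = 1 + θ` and its conjugate `q`: for `t ≤ 2x` with respect to `z dz`, as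
`(c, d)` lies in a `D`-window of mass `≲ xt`; for `t > 2x` with respect to `dz`, as
`(c, d) = (t - x, t + x)` is an `R`-window of length `2x`. In the kernel the first bracket is
harmless, and `γ = (α - 1/2) q ∈ (-1, 0]` makes `((z - c)(d - z))^γ` integrable with integral
`≲ (d - c)^{2γ+1}`. In both cases the powers of the window size cancel since `1/p + 1/q = 1`. -/

lemma lintegral_Ioo_zero_rpow {γ e : ℝ} (hγ : -1 < γ) (he : 0 ≤ e) :
    ∫⁻ u in Ioo 0 e, ENNReal.ofReal (u ^ γ) = ENNReal.ofReal (e ^ (γ + 1) / (γ + 1)) := by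
  have hint : IntegrableOn (fun u : ℝ => u ^ γ) (Ioc 0 e) :=
    (intervalIntegral.intervalIntegrable_rpow' hγ).1
  rw [setLIntegral_congr Ioo_ae_eq_Ioc, ← ofReal_integral_eq_lintegral_ofReal hint
    ((ae_restrict_iff' measurableSet_Ioc).2 (ae_of_all _ fun u hu => by positivity [hu.1.le])),
    ← intervalIntegral.integral_of_le he, integral_rpow (Or.inl hγ),
    Real.zero_rpow (by linarith), sub_zero]

lemma lintegral_Ioo_sub_rpow {γ c d : ℝ} (hγ : -1 < γ) (hcd : c ≤ d) :
    ∫⁻ z in Ioo c d, ENNReal.ofReal ((z - c) ^ γ)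
      = ENNReal.ofReal ((d - c) ^ (γ + 1) / (γ + 1)) := by
  have hpre : (· - c) ⁻¹' Ioo 0 (d - c) = Ioo c d := by
    ext z; simp only [mem_preimage, mem_Ioo]; constructor <;> intro h <;> constructor <;> linarith
  rw [← lintegral_Ioo_zero_rpow hγ (sub_nonneg.2 hcd), ← hpre]
  exact (measurePreserving_sub_right volume c).setLIntegral_comp_preimage measurableSet_Ioo
    (f := fun u => ENNReal.ofReal (u ^ γ)) (by fun_prop)

lemma lintegral_Ioo_rsub_rpow {γ c d : ℝ} (hγ : -1 < γ) (hcd : c ≤ d) :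
    ∫⁻ z in Ioo c d, ENNReal.ofReal ((d - z) ^ γ)
      = ENNReal.ofReal ((d - c) ^ (γ + 1) / (γ + 1)) := by
  have hpre : (d - ·) ⁻¹' Ioo 0 (d - c) = Ioo c d := by
    ext z; simp only [mem_preimage, mem_Ioo]; constructor <;> intro h <;> constructor <;> linarith
  rw [← lintegral_Ioo_zero_rpow hγ (sub_nonneg.2 hcd), ← hpre]
  exact (Measure.measurePreserving_sub_left volume d).setLIntegral_comp_preimage
    measurableSet_Ioo (f := fun u => ENNReal.ofReal (u ^ γ)) (by fun_prop)

lemma mul_rpow_le_of_mem_Ioo {γ c d z : ℝ} (hγ : γ ≤ 0) (hz : z ∈ Ioo c d) :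
    ((z - c) * (d - z)) ^ γ ≤ ((d - c) / 2) ^ γ * ((z - c) ^ γ + (d - z) ^ γ) := by
  obtain ⟨hcz, hzd⟩ := hz
  have hl : 0 ≤ (z - c) ^ γ := by positivity [(sub_pos.2 hcz).le]
  have hr : 0 ≤ (d - z) ^ γ := by positivity [(sub_pos.2 hzd).le]
  rw [Real.mul_rpow (by linarith) (by linarith)]
  rcases le_total (z - c) (d - z) with h | h
  · have : (d - z) ^ γ ≤ ((d - c) / 2) ^ γ :=
      Real.rpow_le_rpow_of_nonpos (by linarith) (by linarith) hγ
    nlinarith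
  · have : (z - c) ^ γ ≤ ((d - c) / 2) ^ γ :=
      Real.rpow_le_rpow_of_nonpos (by linarith) (by linarith) hγ
    nlinarith

lemma lintegral_Ioo_mul_rpow_le {γ c d : ℝ} (hγ1 : -1 < γ) (hγ0 : γ ≤ 0) (hcd : c < d) :
    ∫⁻ z in Ioo c d, ENNReal.ofReal (((z - c) * (d - z)) ^ γ)
      ≤ ENNReal.ofReal (2 ^ (γ + 2) / (γ + 1) * ((d - c) / 2) ^ (2 * γ + 1)) := by
  set e := (d - c) / 2
  have he : 0 < e := by positivity [sub_pos.2 hcd]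
  have hγ : 0 < γ + 1 := by linarith
  have hsum : e ^ γ * ((d - c) ^ (γ + 1) / (γ + 1) + (d - c) ^ (γ + 1) / (γ + 1))
      = 2 ^ (γ + 2) / (γ + 1) * e ^ (2 * γ + 1) := by
    have he2 : e ^ (2 * γ + 1) = e ^ γ * e ^ (γ + 1) := by
      rw [← Real.rpow_add he]; ring_nf
    rw [he2, show γ + 2 = γ + 1 + 1 by ring, Real.rpow_add_one two_ne_zero,
      show d - c = 2 * e by ring, Real.mul_rpow zero_le_two he.le]
    ring
  calc ∫⁻ z in Ioo c d, ENNReal.ofReal (((z - c) * (d - z)) ^ γ)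
      ≤ ∫⁻ z in Ioo c d, ENNReal.ofReal (e ^ γ) *
          (ENNReal.ofReal ((z - c) ^ γ) + ENNReal.ofReal ((d - z) ^ γ)) := by
        refine setLIntegral_mono (by fun_prop) fun z hz => ?_
        rw [← ENNReal.ofReal_add (by positivity [(sub_pos.2 hz.1).le])
            (by positivity [(sub_pos.2 hz.2).le]), ← ENNReal.ofReal_mul (by positivity)]
        exact ENNReal.ofReal_le_ofReal (mul_rpow_le_of_mem_Ioo hγ0 hz)
    _ = ENNReal.ofReal (e ^ γ) * (ENNReal.ofReal ((d - c) ^ (γ + 1) / (γ + 1)) +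
          ENNReal.ofReal ((d - c) ^ (γ + 1) / (γ + 1))) := by
        rw [lintegral_const_mul _ (by fun_prop), lintegral_add_left (by fun_prop),
          lintegral_Ioo_sub_rpow hγ1 hcd.le, lintegral_Ioo_rsub_rpow hγ1 hcd.le]
    _ = ENNReal.ofReal (2 ^ (γ + 2) / (γ + 1) * e ^ (2 * γ + 1)) := by
        rw [← ENNReal.ofReal_add (by positivity) (by positivity),
          ← ENNReal.ofReal_mul (by positivity), hsum]

lemma setLIntegral_mul_rpow_le {φ : ℝ → ℝ} {B γ c d : ℝ} (hγ1 : -1 < γ) (hγ0 : γ ≤ 0)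
    (hcd : c < d) (hB : 0 ≤ B) (hφ : ∀ z ∈ Ioo c d, φ z ≤ B) :
    ∫⁻ z in Ioo c d, ENNReal.ofReal (φ z * ((z - c) * (d - z)) ^ γ)
      ≤ ENNReal.ofReal (B * (2 ^ (γ + 2) / (γ + 1) * ((d - c) / 2) ^ (2 * γ + 1))) := by
  calc ∫⁻ z in Ioo c d, ENNReal.ofReal (φ z * ((z - c) * (d - z)) ^ γ)
      ≤ ∫⁻ z in Ioo c d, ENNReal.ofReal B * ENNReal.ofReal (((z - c) * (d - z)) ^ γ) := by
        refine setLIntegral_mono (by fun_prop) fun z hz => ?_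
        rw [← ENNReal.ofReal_mul hB]
        exact ENNReal.ofReal_le_ofReal (mul_le_mul_of_nonneg_right (hφ z hz)
          (by positivity [(mul_pos (sub_pos.2 hz.1) (sub_pos.2 hz.2)).le]))
    _ ≤ _ := by
        rw [lintegral_const_mul _ (by fun_prop), ENNReal.ofReal_mul hB]
        gcongr
        exact lintegral_Ioo_mul_rpow_le hγ1 hγ0 hcd

lemma lintegral_mul_le_of_scaling {α : Type*} [MeasurableSpace α] {μ : Measure α} {p q : ℝ}
    (hpq : p.HolderConjugate q) {G H : α → ℝ≥0∞} (hG : AEMeasurable G μ)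
    (hH : AEMeasurable H μ) {V c₁ c₂ : ℝ} (hV : 0 < V) (hc₁ : 0 ≤ c₁) (hc₂ : 0 ≤ c₂)
    {M : ℝ≥0∞} (hGp : ∫⁻ w, G w ^ p ∂μ ≤ ENNReal.ofReal (c₁ * V) * M)
    (hHq : ∫⁻ w, H w ^ q ∂μ ≤ ENNReal.ofReal (c₂ * V ^ (1 - q))) :
    ∫⁻ w, (G * H) w ∂μ ≤ ENNReal.ofReal (c₁ ^ (1 / p) * c₂ ^ (1 / q)) * M ^ (1 / p) := by
  have hp : 0 ≤ 1 / p := one_div_nonneg.2 hpq.nonneg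
  have hq : 0 ≤ 1 / q := one_div_nonneg.2 hpq.symm.nonneg
  have hscale : (c₁ * V) ^ (1 / p) * (c₂ * V ^ (1 - q)) ^ (1 / q)
      = c₁ ^ (1 / p) * c₂ ^ (1 / q) := by
    have hexp : 1 / p + (1 - q) * (1 / q) = 0 := by
      have := hpq.inv_add_inv_eq_one
      field_simp [hpq.symm.ne_zero] at this ⊢
      linarith
    rw [Real.mul_rpow hc₁ hV.le, Real.mul_rpow hc₂ (by positivity), ← Real.rpow_mul hV.le,
      mul_mul_mul_comm, ← Real.rpow_add hV, hexp, Real.rpow_zero, mul_one]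
  calc ∫⁻ w, (G * H) w ∂μ
      ≤ (∫⁻ w, G w ^ p ∂μ) ^ (1 / p) * (∫⁻ w, H w ^ q ∂μ) ^ (1 / q) :=
        ENNReal.lintegral_mul_le_Lp_mul_Lq μ hpq hG hH
    _ ≤ (ENNReal.ofReal (c₁ * V) * M) ^ (1 / p) *
          ENNReal.ofReal (c₂ * V ^ (1 - q)) ^ (1 / q) := by gcongr
    _ = ENNReal.ofReal (c₁ ^ (1 / p) * c₂ ^ (1 / q)) * M ^ (1 / p) := by
        rw [ENNReal.mul_rpow_of_nonneg _ _ hp, ENNReal.ofReal_rpow_of_nonneg (by positivity) hp,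
          ENNReal.ofReal_rpow_of_nonneg (by positivity) hq, ← hscale,
          ENNReal.ofReal_mul (by positivity)]
        ring

lemma setLIntegral_le_Dop {F : ℝ → ℝ} {x A B : ℝ} (hA : 0 ≤ A) (hAx : A < x) (hxB : x < B) :
    ∫⁻ z in Ioo A B, ENNReal.ofReal (z * |F z|) ≤ ENNReal.ofReal (B ^ 2 - A ^ 2) * Dop F x := by
  have hpos : 0 < B ^ 2 - A ^ 2 := by nlinarith
  refine (ENNReal.inv_mul_le_iff (by simpa using hpos) ENNReal.ofReal_ne_top).1 ?_
  exact le_iSup_of_le A <| le_iSup_of_le B <| le_iSup_of_le hA <| le_iSup_of_le hAx <|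
    le_iSup_of_le hxB le_rfl

lemma setLIntegral_le_Rop {F : ℝ → ℝ} {x t : ℝ} (hx : 0 < x) (ht : 2 * x < t) :
    ∫⁻ z in Icc (t - x) (t + x), ENNReal.ofReal |F z| ≤ ENNReal.ofReal (2 * x) * Rop F x := by
  refine (ENNReal.inv_mul_le_iff (by simpa using hx) ENNReal.ofReal_ne_top).1 ?_
  exact le_iSup_of_le t <| le_iSup_of_le ht le_rfl

lemma exists_Dop_window {x t : ℝ} (hx : 0 < x) (ht : 0 < t) (htx : t ≤ 2 * x) :
    ∃ A, 0 ≤ A ∧ A < x ∧ A ≤ |x - t| ∧ (x + t) ^ 2 - A ^ 2 ≤ 9 * (x * t) := by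
  rcases htx.lt_or_eq with htx | rfl
  · refine ⟨|x - t|, abs_nonneg _, abs_lt.2 ⟨by linarith, by linarith⟩, le_rfl, ?_⟩
    nlinarith [sq_abs (x - t)]
  · refine ⟨x / 2, by linarith, by linarith, ?_, by nlinarith⟩
    rw [show x - 2 * x = -x by ring, abs_neg, abs_of_pos hx]
    linarith

lemma rpow_le_two_mul_rpow {u v s : ℝ} (hu : 0 < u) (huv : u ≤ v) (hv : v ≤ 2 * u)
    (hs : s ≤ 1) : v ^ s ≤ 2 * u ^ s := by
  rcases le_or_gt 0 s with hs0 | hs0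
  · calc v ^ s ≤ (2 * u) ^ s := Real.rpow_le_rpow (by linarith) hv hs0
      _ = 2 ^ s * u ^ s := Real.mul_rpow zero_le_two hu.le
      _ ≤ 2 ^ (1 : ℝ) * u ^ s := by gcongr; norm_num
      _ = 2 * u ^ s := by rw [Real.rpow_one]
  · calc v ^ s ≤ u ^ s := Real.rpow_le_rpow_of_nonpos hu huv hs0.le
      _ ≤ 2 * u ^ s := by linarith [Real.rpow_nonneg hu.le s]

lemma setLIntegral_rpow_le_Dop {f : ℝ → ℝ} (hf0 : ∀ z, 0 ≤ f z) {p x t : ℝ} (hp : 0 < p)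
    (hx : 0 < x) (ht : 0 < t) (htx : t ≤ 2 * x) :
    ∫⁻ z in Ioo |x - t| (x + t), ENNReal.ofReal (f z * z ^ (1 / p)) ^ p
      ≤ ENNReal.ofReal (9 * (x * t)) * Dop (fun z => f z ^ p) x := by
  obtain ⟨A, hA0, hAx, hAc, hAd⟩ := exists_Dop_window hx ht htx
  calc ∫⁻ z in Ioo |x - t| (x + t), ENNReal.ofReal (f z * z ^ (1 / p)) ^ p
      = ∫⁻ z in Ioo |x - t| (x + t), ENNReal.ofReal (z * |f z ^ p|) := by
        refine setLIntegral_congr_fun measurableSet_Ioo fun z hz => ?_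
        have hz0 : 0 < z := (abs_nonneg _).trans_lt hz.1
        rw [ENNReal.ofReal_rpow_of_nonneg (by positivity [hf0 z]) hp.le,
          Real.mul_rpow (hf0 z) (by positivity), ← Real.rpow_mul hz0.le,
          one_div_mul_cancel hp.ne', Real.rpow_one, abs_of_nonneg (by positivity [hf0 z]),
          mul_comm]
    _ ≤ ∫⁻ z in Ioo A (x + t), ENNReal.ofReal (z * |f z ^ p|) :=
        lintegral_mono_set (Ioo_subset_Ioo_left hAc)
    _ ≤ ENNReal.ofReal ((x + t) ^ 2 - A ^ 2) * Dop (fun z => f z ^ p) x :=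
        setLIntegral_le_Dop hA0 hAx (by linarith)
    _ ≤ ENNReal.ofReal (9 * (x * t)) * Dop (fun z => f z ^ p) x := by gcongr

lemma setLIntegral_rpow_le_Rop {f : ℝ → ℝ} (hf0 : ∀ z, 0 ≤ f z) {p x t : ℝ} (hp : 0 < p)
    (hx : 0 < x) (htx : 2 * x < t) :
    ∫⁻ z in Ioo |x - t| (x + t), ENNReal.ofReal (f z) ^ p
      ≤ ENNReal.ofReal (2 * x) * Rop (fun z => f z ^ p) x := by
  calc ∫⁻ z in Ioo |x - t| (x + t), ENNReal.ofReal (f z) ^ p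
      = ∫⁻ z in Ioo (t - x) (t + x), ENNReal.ofReal |f z ^ p| := by
        rw [abs_sub_comm, abs_of_pos (by linarith), add_comm x t]
        refine lintegral_congr fun z => ?_
        rw [ENNReal.ofReal_rpow_of_nonneg (hf0 z) hp.le, abs_of_nonneg (by positivity [hf0 z])]
    _ ≤ ∫⁻ z in Icc (t - x) (t + x), ENNReal.ofReal |f z ^ p| :=
        lintegral_mono_set Ioo_subset_Icc_self
    _ ≤ ENNReal.ofReal (2 * x) * Rop (fun z => f z ^ p) x := setLIntegral_le_Rop hx htx

lemma rpow_mul_window_le {x t r s K : ℝ} (hx : 0 < x) (ht : 0 < t) (hK : 0 ≤ K) (hs : s ≤ 1) :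
    (x * t) ^ r * (x + t) ^ s * (K * ((x + t - |x - t|) / 2) ^ s)
      ≤ 2 * K * (x * t) ^ (r + s) := by
  have hxt : 0 < x * t := mul_pos hx ht
  have hm : x * t ≤ (x + t) * ((x + t - |x - t|) / 2) ∧
      (x + t) * ((x + t - |x - t|) / 2) ≤ 2 * (x * t) := by
    rcases le_total x t with h | h
    · rw [abs_of_nonpos (by linarith)]; constructor <;> nlinarith
    · rw [abs_of_nonneg (by linarith)]; constructor <;> nlinarith
  calc (x * t) ^ r * (x + t) ^ s * (K * ((x + t - |x - t|) / 2) ^ s)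
      = K * (x * t) ^ r * ((x + t) * ((x + t - |x - t|) / 2)) ^ s := by
        rw [Real.mul_rpow (x := x + t) (by positivity) (by nlinarith [hm.1])]; ring
    _ ≤ K * (x * t) ^ r * (2 * (x * t) ^ s) := by
        gcongr
        exact rpow_le_two_mul_rpow hxt hm.1 hm.2 hs
    _ = 2 * K * (x * t) ^ (r + s) := by rw [Real.rpow_add hxt]; ring

noncomputable def psiEKernel (a x t z : ℝ) : ℝ :=
  (x * t) ^ (-(2 * a)) * ((z + |x - t|) * (x + t + z)) ^ (a - 1/2) *
    ((z - |x - t|) * (x + t - z)) ^ (a - 1/2)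

@[fun_prop]
lemma measurable_psiEKernel (a x t : ℝ) : Measurable (psiEKernel a x t) := by
  unfold psiEKernel; fun_prop

lemma abs_sub_lt_and_lt_add_iff {x t z : ℝ} :
    |x - z| < t ∧ t < x + z ↔ z ∈ Ioo |x - t| (x + t) := by
  simp only [mem_Ioo, abs_lt]
  constructor <;> rintro ⟨⟨h₁, h₂⟩, h₃⟩ <;> exact ⟨⟨by linarith, by linarith⟩, by linarith⟩

lemma PsiE_zero_mul_rpow {a x t z : ℝ} (hx : 0 < x) (ht : 0 < t)
    (hz : z ∈ Ioo |x - t| (x + t)) :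
    PsiE a 0 t x z * z ^ (2 * a + 1) = z * psiEKernel a x t z := by
  have hz0 : 0 < z := (abs_nonneg _).trans_lt hz.1
  have hout : 0 < (z + |x - t|) * (x + t + z) := by positivity
  have hin : 0 < (z - |x - t|) * (x + t - z) := mul_pos (sub_pos.2 hz.1) (sub_pos.2 hz.2)
  have hfactor : (t ^ 2 - (x - z) ^ 2) * ((x + z) ^ 2 - t ^ 2)
      = ((z + |x - t|) * (x + t + z)) * ((z - |x - t|) * (x + t - z)) := by
    linear_combination ((x + t) ^ 2 - z ^ 2) * sq_abs (x - t)
  have hpow : (x * z) ^ (-(2 * a)) * t ^ (-(2 * a)) * z ^ (2 * a + 1)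
      = z * (x * t) ^ (-(2 * a)) := by
    rw [Real.mul_rpow hx.le hz0.le, Real.mul_rpow hx.le ht.le, Real.rpow_add hz0, Real.rpow_one,
      Real.rpow_neg hz0.le]
    field_simp
  simp only [PsiE, if_pos (abs_sub_lt_and_lt_add_iff.2 hz), psiEKernel, hfactor,
    Real.mul_rpow hout.le hin.le, mul_zero, sub_zero, add_zero]
  linear_combination ((z + |x - t|) * (x + t + z)) ^ (a - 1/2) *
    ((z - |x - t|) * (x + t - z)) ^ (a - 1/2) * hpow

lemma lintegral_PsiE_zero_eq {a x t : ℝ} (hx : 0 < x) (ht : 0 < t) (f : ℝ → ℝ) :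
    ∫⁻ z in Ioi 0, ENNReal.ofReal (PsiE a 0 t x z * f z * z ^ (2 * a + 1))
      = ∫⁻ z in Ioo |x - t| (x + t), ENNReal.ofReal (f z * (z * psiEKernel a x t z)) := by
  have hsub : Ioo |x - t| (x + t) ⊆ Ioi 0 := fun z hz => (abs_nonneg _).trans_lt hz.1
  rw [← inter_eq_left.2 hsub, ← setLIntegral_indicator measurableSet_Ioo]
  refine setLIntegral_congr_fun measurableSet_Ioi fun z _ => ?_
  by_cases hz : z ∈ Ioo |x - t| (x + t)
  · rw [indicator_of_mem hz, mul_right_comm, PsiE_zero_mul_rpow hx ht hz, mul_comm]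
  · rw [indicator_of_notMem hz, PsiE, if_neg (mt abs_sub_lt_and_lt_add_iff.1 hz)]
    simp

lemma rpow_mul_psiEKernel_rpow {a x t z : ℝ} (hx : 0 < x) (ht : 0 < t)
    (hz : z ∈ Ioo |x - t| (x + t)) (e q : ℝ) :
    (z ^ e * psiEKernel a x t z) ^ q
      = (x * t) ^ (-(2 * a) * q) *
          (z ^ (e * q) * ((z + |x - t|) * (x + t + z)) ^ ((a - 1/2) * q)) *
        ((z - |x - t|) * (x + t - z)) ^ ((a - 1/2) * q) := by
  have hz0 : 0 < z := (abs_nonneg _).trans_lt hz.1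
  have hout : 0 < (z + |x - t|) * (x + t + z) := by positivity
  have hin : 0 < (z - |x - t|) * (x + t - z) := mul_pos (sub_pos.2 hz.1) (sub_pos.2 hz.2)
  have hxt : 0 < x * t := mul_pos hx ht
  rw [psiEKernel, Real.mul_rpow (by positivity) (by positivity),
    Real.mul_rpow (by positivity) (by positivity), Real.mul_rpow (by positivity) (by positivity),
    ← Real.rpow_mul hz0.le, ← Real.rpow_mul hxt.le, ← Real.rpow_mul hout.le,
    ← Real.rpow_mul hin.le]
  ring

lemma lintegral_rpow_psiEKernel_le {a q e B x t : ℝ} (hx : 0 < x) (ht : 0 < t) (hq : 0 ≤ q)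
    (hγ1 : -1 < (a - 1/2) * q) (hγ0 : (a - 1/2) * q ≤ 0) (hB : 0 ≤ B)
    (hφ : ∀ z ∈ Ioo |x - t| (x + t),
      z ^ (e * q) * ((z + |x - t|) * (x + t + z)) ^ ((a - 1/2) * q) ≤ B) :
    ∫⁻ z in Ioo |x - t| (x + t), ENNReal.ofReal (z ^ e * psiEKernel a x t z) ^ q
      ≤ ENNReal.ofReal ((x * t) ^ (-(2 * a) * q) * B *
          (2 ^ ((a - 1/2) * q + 2) / ((a - 1/2) * q + 1) *
            ((x + t - |x - t|) / 2) ^ (2 * ((a - 1/2) * q) + 1))) := by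
  have hcd : |x - t| < x + t := abs_lt.2 ⟨by linarith, by linarith⟩
  calc ∫⁻ z in Ioo |x - t| (x + t), ENNReal.ofReal (z ^ e * psiEKernel a x t z) ^ q
      = ∫⁻ z in Ioo |x - t| (x + t), ENNReal.ofReal ((x * t) ^ (-(2 * a) * q) *
          (z ^ (e * q) * ((z + |x - t|) * (x + t + z)) ^ ((a - 1/2) * q)) *
          ((z - |x - t|) * (x + t - z)) ^ ((a - 1/2) * q)) := by
        refine setLIntegral_congr_fun measurableSet_Ioo fun z hz => ?_
        have hz0 : 0 < z := (abs_nonneg _).trans_lt hz.1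
        have hin : 0 < (z - |x - t|) * (x + t - z) := mul_pos (sub_pos.2 hz.1) (sub_pos.2 hz.2)
        rw [ENNReal.ofReal_rpow_of_nonneg (by unfold psiEKernel; positivity) hq,
          rpow_mul_psiEKernel_rpow hx ht hz]
    _ ≤ _ := setLIntegral_mul_rpow_le hγ1 hγ0 hcd (by positivity) fun z hz =>
        mul_le_mul_of_nonneg_left (hφ z hz) (by positivity)

lemma mul_rpow_le_rpow_of_mem_Ioo {γ c d z : ℝ} (hc : 0 ≤ c) (hγ1 : -1 < γ) (hγ0 : γ ≤ 0)
    (hz : z ∈ Ioo c d) : z * ((z + c) * (d + z)) ^ γ ≤ d ^ (2 * γ + 1) := by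
  have hz0 : 0 < z := hc.trans_lt hz.1
  have hd : 0 < d := hz0.trans hz.2
  calc z * ((z + c) * (d + z)) ^ γ ≤ z * (z * d) ^ γ := by
        refine mul_le_mul_of_nonneg_left (Real.rpow_le_rpow_of_nonpos (mul_pos hz0 hd) ?_ hγ0)
          hz0.le
        nlinarith [mul_nonneg hc hd.le, mul_nonneg hc hz0.le]
    _ = z ^ (γ + 1) * d ^ γ := by
        rw [Real.mul_rpow hz0.le hd.le, Real.rpow_add_one hz0.ne']; ring
    _ ≤ d ^ (γ + 1) * d ^ γ := by
        gcongr
        · linarith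
        · exact hz.2.le
    _ = d ^ (2 * γ + 1) := by rw [← Real.rpow_add hd]; ring_nf

lemma exists_lintegral_psiEKernel_le_Dop {a p q : ℝ} (hpq : p.HolderConjugate q)
    (hγ1 : -1 < (a - 1/2) * q) (hγ0 : (a - 1/2) * q ≤ 0) :
    ∃ C : ℝ, 0 ≤ C ∧ ∀ f : ℝ → ℝ, Measurable f → (∀ z, 0 ≤ f z) →
      ∀ x t : ℝ, 0 < x → 0 < t → t ≤ 2 * x →
        ∫⁻ z in Ioo |x - t| (x + t), ENNReal.ofReal (f z * (z * psiEKernel a x t z))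
          ≤ ENNReal.ofReal C * Dop (fun z => f z ^ p) x ^ (1 / p) := by
  set γ := (a - 1/2) * q with hγ
  set K := 2 ^ (γ + 2) / (γ + 1)
  have hK : 0 ≤ K := div_nonneg (by positivity) (by linarith)
  have hp := hpq.pos
  have hq := hpq.symm.pos
  refine ⟨9 ^ (1 / p) * (2 * K) ^ (1 / q), by positivity, fun f hf hf0 x t hx ht htx => ?_⟩
  have hxt : 0 < x * t := mul_pos hx ht
  have hsplit : ∀ z ∈ Ioo |x - t| (x + t), ENNReal.ofReal (f z * (z * psiEKernel a x t z))
      = ENNReal.ofReal (f z * z ^ (1 / p)) * ENNReal.ofReal (z ^ (1 / q) * psiEKernel a x t z) := by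
    intro z hz
    have hz0 : 0 < z := (abs_nonneg _).trans_lt hz.1
    have hz1 : z ^ (1 / p) * z ^ (1 / q) = z := by
      rw [← Real.rpow_add hz0, show 1 / p + 1 / q = 1 by simpa using hpq.one_div_add_one_div,
        Real.rpow_one]
    rw [← ENNReal.ofReal_mul (by positivity [hf0 z])]
    congr 1
    linear_combination (f z * psiEKernel a x t z) * hz1.symm
  rw [setLIntegral_congr_fun measurableSet_Ioo hsplit]
  refine lintegral_mul_le_of_scaling (G := fun z => ENNReal.ofReal (f z * z ^ (1 / p)))
    (H := fun z => ENNReal.ofReal (z ^ (1 / q) * psiEKernel a x t z)) hpq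
    (by fun_prop) (by fun_prop)
    hxt (by norm_num) (by positivity) ?_ ?_
  · exact setLIntegral_rpow_le_Dop hf0 hp hx ht htx
  · refine (lintegral_rpow_psiEKernel_le hx ht hq.le hγ1 hγ0 (B := (x + t) ^ (2 * γ + 1))
      (by positivity) fun z hz => ?_).trans (ENNReal.ofReal_le_ofReal ?_)
    · rw [one_div_mul_cancel hq.ne', Real.rpow_one]
      exact mul_rpow_le_rpow_of_mem_Ioo (abs_nonneg _) hγ1 hγ0 hz
    · calc (x * t) ^ (-(2 * a) * q) * (x + t) ^ (2 * γ + 1) *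
            (K * ((x + t - |x - t|) / 2) ^ (2 * γ + 1))
          ≤ 2 * K * (x * t) ^ (-(2 * a) * q + (2 * γ + 1)) :=
            rpow_mul_window_le hx ht hK (by linarith)
        _ = 2 * K * (x * t) ^ (1 - q) := by rw [hγ]; ring_nf

lemma exists_lintegral_psiEKernel_le_Rop {a p q : ℝ} (hpq : p.HolderConjugate q)
    (hγ1 : -1 < (a - 1/2) * q) (hγ0 : (a - 1/2) * q ≤ 0) :
    ∃ C : ℝ, 0 ≤ C ∧ ∀ f : ℝ → ℝ, Measurable f → (∀ z, 0 ≤ f z) →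
      ∀ x t : ℝ, 0 < x → 2 * x < t →
        ∫⁻ z in Ioo |x - t| (x + t), ENNReal.ofReal (f z * (z * psiEKernel a x t z))
          ≤ ENNReal.ofReal C * Rop (fun z => f z ^ p) x ^ (1 / p) := by
  set γ := (a - 1/2) * q with hγ
  set K := 2 ^ (γ + 2) / (γ + 1)
  have hK : 0 ≤ K := div_nonneg (by positivity) (by linarith)
  have hp := hpq.pos
  have hq := hpq.symm.pos
  refine ⟨2 ^ (1 / p) * ((3 / 2) ^ q * K) ^ (1 / q), by positivity,
    fun f hf hf0 x t hx htx => ?_⟩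
  have ht : 0 < t := by linarith
  have hc : |x - t| = t - x := by rw [abs_sub_comm, abs_of_pos (by linarith)]
  have hsplit : ∀ z, ENNReal.ofReal (f z * (z * psiEKernel a x t z))
      = ENNReal.ofReal (f z) * ENNReal.ofReal (z ^ (1 : ℝ) * psiEKernel a x t z) := fun z => by
    rw [Real.rpow_one, ENNReal.ofReal_mul (hf0 z)]
  simp_rw [hsplit]
  refine lintegral_mul_le_of_scaling (G := fun z => ENNReal.ofReal (f z))
    (H := fun z => ENNReal.ofReal (z ^ (1 : ℝ) * psiEKernel a x t z)) hpq
    (by fun_prop) (by fun_prop) hx (by norm_num) (by positivity) ?_ ?_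
  · exact setLIntegral_rpow_le_Rop hf0 hp hx htx
  · refine (lintegral_rpow_psiEKernel_le hx ht hq.le hγ1 hγ0 (B := (3 / 2 * t) ^ q * (t * t) ^ γ)
      (by positivity) fun z hz => ?_).trans (le_of_eq ?_)
    · rw [hc] at hz ⊢
      have hz0 : 0 < z := by linarith [hz.1]
      have hout : t * t ≤ (z + (t - x)) * (x + t + z) := by nlinarith [hz.1, hz.2]
      rw [one_mul]
      exact mul_le_mul (Real.rpow_le_rpow hz0.le (by linarith [hz.2]) hq.le)
        (Real.rpow_le_rpow_of_nonpos (mul_pos ht ht) hout hγ0)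
        (Real.rpow_nonneg ((mul_pos ht ht).le.trans hout) _) (by positivity)
    · have hxexp : x ^ (-(2 * a) * q) * x ^ (2 * γ + 1) = x ^ (1 - q) := by
        rw [← Real.rpow_add hx, hγ]; ring_nf
      have htexp : t ^ (-(2 * a) * q) * t ^ q * t ^ γ * t ^ γ = 1 := by
        rw [← Real.rpow_add ht, ← Real.rpow_add ht, ← Real.rpow_add ht,
          show -(2 * a) * q + q + γ + γ = 0 by rw [hγ]; ring, Real.rpow_zero]
      congr 1
      rw [hc, show (x + t - (t - x)) / 2 = x by ring, Real.mul_rpow hx.le ht.le,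
        Real.mul_rpow (by norm_num) ht.le, Real.mul_rpow ht.le ht.le, ← hxexp]
      linear_combination (3 / 2) ^ q * K * x ^ (-(2 * a) * q) * x ^ (2 * γ + 1) * htexp

theorem PsiStarE_beta_zero_controlled_general (a θ : ℝ) (ha2 : a < 1/2)
    (hθ : 0 < θ) (hθ2 : 1/(1 + θ) < a + 1/2) :
    ∃ C : ℝ≥0, ∀ f : ℝ → ℝ, Measurable f → (∀ z, 0 ≤ f z) → ∀ x : ℝ, 0 < x →
      PsiStarE a 0 f x ≤
        C * ((Dop (fun z => f z ^ (1 + θ)) x) ^ (1/(1 + θ)) +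
          (Rop (fun z => f z ^ (1 + θ)) x) ^ (1/(1 + θ))) := by
  obtain ⟨q, hpq⟩ : ∃ q, (1 + θ).HolderConjugate q := ⟨_, .conjExponent (by linarith)⟩
  have hq := hpq.symm.pos
  have hγ1 : -1 < (a - 1/2) * q := by
    have h : (1/2 - a) * q < q⁻¹ * q := by
      gcongr; rw [← hpq.one_sub_inv, ← one_div]; linarith
    rw [inv_mul_cancel₀ hq.ne'] at h
    linarith
  have hγ0 : (a - 1/2) * q ≤ 0 := mul_nonpos_of_nonpos_of_nonneg (by linarith) hq.le
  obtain ⟨C₁, hC₁, hD⟩ := exists_lintegral_psiEKernel_le_Dop hpq hγ1 hγ0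
  obtain ⟨C₂, hC₂, hR⟩ := exists_lintegral_psiEKernel_le_Rop hpq hγ1 hγ0
  refine ⟨(C₁ + C₂).toNNReal, fun f hf hf0 x hx => iSup₂_le fun t (ht : 0 < t) => ?_⟩
  change _ ≤ ENNReal.ofReal (C₁ + C₂) * _
  rw [lintegral_PsiE_zero_eq hx ht f]
  rcases le_or_gt t (2 * x) with htx | htx
  · refine (hD f hf hf0 x t hx ht htx).trans ?_
    gcongr
    · linarith
    · exact le_self_add
  · refine (hR f hf hf0 x t hx htx).trans ?_
    gcongr
    · linarith
    · exact le_add_self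

/-- control of Ψ^{α,0}_{*,E} by D and R. -/
theorem PsiStarE_beta_zero_controlled (a θ : ℝ) (ha1 : -(1/2) < a) (ha2 : a < 1/2)
    (hθ : 0 < θ) (hθ2 : 1/(1 + θ) < a + 1/2) :
    ∃ C : ℝ≥0, ∀ f : ℝ → ℝ, Measurable f → (∀ z, 0 ≤ f z) → ∀ x : ℝ, 0 < x →
      PsiStarE a 0 f x ≤
        C * ((Dop (fun z => f z ^ (1 + θ)) x) ^ (1/(1 + θ)) +
          (Rop (fun z => f z ^ (1 + θ)) x) ^ (1/(1 + θ))) :=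
  PsiStarE_beta_zero_controlled_general a θ ha2 hθ hθ2
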